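/- Let F be a distribution on [0,∞) with F^{*n} ∈ L(γ) for some integer n ≥ 2 and γ ≥ 0. If F̄(x) = o((F^{*2})̄(x)) as x → ∞, then F^{*k} ∈ L(γ) for every integer k ≥ n. -/

import Mathlib

open MeasureTheory Filter Set Asymptotics

/-- The tail `F̄(x) = μ((x,∞))` of a distribution `μ` on `ℝ`. -/
noncomputable def tail (μ : MeasureTheory.Measure ℝ) (x : ℝ) : ℝ := (μ (Set.Ioi x)).toReal

/-- Convolution of two distributions on `ℝ`. -/
noncomputable def mconv (μ ν : MeasureTheory.Measure ℝ) : MeasureTheory.Measure ℝ :=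
  MeasureTheory.Measure.map (fun p : ℝ × ℝ => p.1 + p.2) (μ.prod ν)

/-- `iconv μ k` is the `k`-fold convolution `μ^{*k}` (with `μ^{*0} = δ₀`). -/
noncomputable def iconv (μ : MeasureTheory.Measure ℝ) : ℕ → MeasureTheory.Measure ℝ
  | 0 => MeasureTheory.Measure.dirac 0
  | n + 1 => mconv (iconv μ n) μ

/-- The class `L(γ)`: `F̄(x-t) ~ e^{γt} F̄(x)` as `x → ∞`, for every `t`. -/
def MemL (γ : ℝ) (μ : MeasureTheory.Measure ℝ) : Prop :=
  ∀ t : ℝ, Filter.Tendsto (fun x => tail μ (x - t) / tail μ x) Filter.atTop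
    (nhds (Real.exp (γ * t)))

/-- The class `OS`: `limsup_{x→∞} (F*F)̄(x) / F̄(x) < ∞`. -/
def MemOS (μ : MeasureTheory.Measure ℝ) : Prop :=
  Filter.IsBoundedUnder (· ≤ ·) Filter.atTop (fun x => tail (mconv μ μ) x / tail μ x)

open Topology

/-!
On `[0,∞)` the tails of convolution powers increase with the power, so `F̄ = o(F̄^{*2})` gives
`F̄ = o(F̄^{*k})` for all `k ≥ 2`, and the theorem follows by induction from the closure property
`G ∈ L(γ)`, `H̄ = o(Ḡ)` ⟹ `G * H ∈ L(γ)`. For the latter write `(G*H)̄(x) = ∫ Ḡ(x - y) dH(y)`.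
Where `x - y ≥ T` the integrand of `(G*H)̄(x-t) - e^{γt}(G*H)̄(x)` is at most `δ Ḡ(x - y)`,
and the remaining region `y > x - T` has `H`-mass `H̄(x - T) = o(Ḡ(x - T)) = o(Ḡ(x))`.
-/

lemma tendsto_div_of_forall_abs_sub_le {α : Type*} {l : Filter α} {u v : α → ℝ} {E : ℝ}
    (hv : ∀ᶠ x in l, 0 < v x)
    (h : ∀ δ > 0, ∃ r : α → ℝ, Tendsto (fun x => r x / v x) l (𝓝 0) ∧
      ∀ᶠ x in l, |u x - E * v x| ≤ δ * v x + r x) :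
    Tendsto (fun x => u x / v x) l (𝓝 E) := by
  rw [Metric.tendsto_nhds]
  intro ε hε
  obtain ⟨r, hr, huv⟩ := h (ε / 2) (half_pos hε)
  filter_upwards [hv, huv, Metric.tendsto_nhds.mp hr _ (half_pos hε)] with x hvx hx hrx
  rw [Real.dist_eq, sub_zero] at hrx
  calc dist (u x / v x) E = |u x - E * v x| / v x := by
        rw [Real.dist_eq, div_sub' hvx.ne', abs_div, abs_of_pos hvx, mul_comm]
    _ ≤ (ε / 2 * v x + r x) / v x := div_le_div_of_nonneg_right hx hvx.le
    _ = ε / 2 + r x / v x := by field_simp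
    _ < ε := by linarith [(abs_lt.mp hrx).2]

section Tail

lemma tail_nonneg (μ : Measure ℝ) (x : ℝ) : 0 ≤ tail μ x := ENNReal.toReal_nonneg

variable {μ : Measure ℝ}

lemma tail_le_one [IsProbabilityMeasure μ] (x : ℝ) : tail μ x ≤ 1 := measureReal_le_one

lemma antitone_tail [IsFiniteMeasure μ] : Antitone (tail μ) := fun _ _ hab =>
  measureReal_mono (Ioi_subset_Ioi hab)

lemma isBigO_tail_of_le {ν : Measure ℝ} {l : Filter ℝ} (h : ∀ x, tail μ x ≤ tail ν x) :
    tail μ =O[l] tail ν :=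
  isBigO_of_le _ fun x => by
    rw [Real.norm_of_nonneg (tail_nonneg μ x), Real.norm_of_nonneg (tail_nonneg ν x)]
    exact h x

lemma integrable_tail_sub [IsProbabilityMeasure μ] (ν : Measure ℝ) [IsFiniteMeasure ν] (x : ℝ) :
    Integrable (fun y => tail μ (x - y)) ν := by
  refine Integrable.of_bound ?_ 1 (ae_of_all _ fun y => ?_)
  · exact (Antitone.comp antitone_tail fun _ _ h => sub_le_sub_left h x).measurable
      |>.aestronglyMeasurable
  · rw [Real.norm_of_nonneg (tail_nonneg μ _)]
    exact tail_le_one _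

end Tail

section Convolution

variable (μ ν : Measure ℝ)

instance isProbabilityMeasure_mconv [IsProbabilityMeasure μ] [IsProbabilityMeasure ν] :
    IsProbabilityMeasure (mconv μ ν) :=
  Measure.isProbabilityMeasure_map (by fun_prop)

lemma mconv_apply_Ioi [SFinite μ] [SFinite ν] (x : ℝ) :
    mconv μ ν (Ioi x) = ∫⁻ y, μ (Ioi (x - y)) ∂ν := by
  have hadd : Measurable fun p : ℝ × ℝ => p.1 + p.2 := by fun_prop
  rw [mconv, Measure.map_apply hadd measurableSet_Ioi,
    Measure.prod_apply_symm (hadd measurableSet_Ioi)]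
  refine lintegral_congr fun y => congr_arg μ ?_
  ext z
  simp [sub_lt_iff_lt_add]

lemma tail_mconv [IsFiniteMeasure μ] [SFinite ν] (x : ℝ) :
    tail (mconv μ ν) x = ∫ y, tail μ (x - y) ∂ν := by
  have hmono : Monotone fun y => μ (Ioi (x - y)) := fun _ _ h =>
    measure_mono (Ioi_subset_Ioi (sub_le_sub_left h x))
  rw [tail, mconv_apply_Ioi,
    ← integral_toReal hmono.measurable.aemeasurable (ae_of_all _ fun _ => measure_lt_top _ _)]
  rfl

lemma tail_le_tail_mconv [IsProbabilityMeasure μ] [IsProbabilityMeasure ν] (hν : ν (Iio 0) = 0)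
    (x : ℝ) : tail μ x ≤ tail (mconv μ ν) x := by
  have hpos : ∀ᵐ y ∂ν, 0 ≤ y := by
    rw [ae_iff]
    simp only [not_le]
    exact hν
  calc tail μ x = ∫ _, tail μ x ∂ν := by simp
    _ ≤ ∫ y, tail μ (x - y) ∂ν :=
      integral_mono_ae (integrable_const _) (integrable_tail_sub ν x)
        (hpos.mono fun y hy => antitone_tail (by linarith))
    _ = tail (mconv μ ν) x := (tail_mconv μ ν x).symm

lemma abs_tail_mconv_sub_le (G H : Measure ℝ) [IsProbabilityMeasure G] [IsFiniteMeasure H]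
    {t E δ T : ℝ} (hE : 0 ≤ E) (hδ : 0 ≤ δ)
    (hT : ∀ s ≥ T, |tail G (s - t) - E * tail G s| ≤ δ * tail G s) (x : ℝ) :
    |tail (mconv G H) (x - t) - E * tail (mconv G H) x|
      ≤ δ * tail (mconv G H) x + (1 + E) * tail H (x - T) := by
  have hbound : ∀ y, ‖tail G (x - t - y) - E * tail G (x - y)‖
      ≤ δ * tail G (x - y) + (1 + E) * (Ioi (x - T)).indicator 1 y := by
    intro y
    rw [Real.norm_eq_abs]
    by_cases hy : y ∈ Ioi (x - T)
    · rw [indicator_of_mem hy, Pi.one_apply, mul_one]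
      have h₁ := tail_nonneg G (x - t - y)
      have h₂ := tail_nonneg G (x - y)
      have h₃ : tail G (x - t - y) ≤ 1 := tail_le_one _
      have h₄ : tail G (x - y) ≤ 1 := tail_le_one _
      rw [abs_le]
      constructor <;> nlinarith
    · rw [indicator_of_notMem hy, mul_zero, add_zero, sub_right_comm]
      exact hT (x - y) (by simp only [mem_Ioi, not_lt] at hy; linarith)
  have hint : ∀ s, Integrable (fun y => tail G (s - y)) H := integrable_tail_sub H
  have hind : Integrable ((Ioi (x - T)).indicator 1) H :=
    (integrable_const (1 : ℝ)).indicator measurableSet_Ioi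
  calc |tail (mconv G H) (x - t) - E * tail (mconv G H) x|
      = ‖∫ y, (tail G (x - t - y) - E * tail G (x - y)) ∂H‖ := by
        rw [tail_mconv, tail_mconv, integral_sub (hint _) ((hint _).const_mul E),
          integral_const_mul, Real.norm_eq_abs]
    _ ≤ ∫ y, (δ * tail G (x - y) + (1 + E) * (Ioi (x - T)).indicator 1 y) ∂H :=
        norm_integral_le_of_norm_le (((hint x).const_mul δ).add (hind.const_mul _))
          (ae_of_all _ hbound)
    _ = δ * tail (mconv G H) x + (1 + E) * tail H (x - T) := by
        rw [integral_add ((hint x).const_mul δ) (hind.const_mul _), integral_const_mul,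
          integral_const_mul, integral_indicator_one measurableSet_Ioi, tail_mconv]
        rfl

end Convolution

section ClassL

variable {γ : ℝ} {G : Measure ℝ}

lemma MemL.tail_pos [IsProbabilityMeasure G] (hG : MemL γ G) (x : ℝ) : 0 < tail G x := by
  refine (tail_nonneg G x).lt_of_ne fun hx => ?_
  have hzero : ∀ᶠ z in atTop, tail G (z - 0) / tail G z = 0 := by
    filter_upwards [eventually_ge_atTop x] with z hz
    rw [le_antisymm ((antitone_tail hz).trans_eq hx.symm) (tail_nonneg G z), div_zero]
  have hlim := hG 0
  rw [mul_zero, Real.exp_zero] at hlim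
  exact one_ne_zero (tendsto_nhds_unique hlim (tendsto_const_nhds.congr' (hzero.mono
    fun _ h => h.symm)))

lemma MemL.isBigO_tail_sub [IsProbabilityMeasure G] (hG : MemL γ G) (c : ℝ) :
    (fun x => tail G (x - c)) =O[atTop] tail G :=
  isBigO_of_div_tendsto_nhds (Eventually.of_forall fun x hx => absurd hx (hG.tail_pos x).ne')
    _ (hG c)

lemma MemL.exists_abs_tail_sub_le [IsProbabilityMeasure G] (hG : MemL γ G) (t : ℝ) {δ : ℝ}
    (hδ : 0 < δ) : ∃ T, ∀ s ≥ T, |tail G (s - t) - Real.exp (γ * t) * tail G s| ≤ δ * tail G s := by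
  obtain ⟨T, hT⟩ := eventually_atTop.mp (Metric.tendsto_nhds.mp (hG t) δ hδ)
  refine ⟨T, fun s hs => ?_⟩
  have hpos := hG.tail_pos s
  have hratio := (hT s hs).le
  rw [Real.dist_eq, div_sub' hpos.ne', abs_div, abs_of_pos hpos, div_le_iff₀ hpos] at hratio
  rwa [mul_comm (tail G s)] at hratio

lemma MemL.mconv_of_isLittleO {H : Measure ℝ} [IsProbabilityMeasure G] [IsProbabilityMeasure H]
    (hG : MemL γ G) (hH : H (Iio 0) = 0) (ho : (fun x => tail H x) =o[atTop] fun x => tail G x) :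
    MemL γ (mconv G H) := by
  have hGM := tail_le_tail_mconv G H hH
  intro t
  refine tendsto_div_of_forall_abs_sub_le
    (Eventually.of_forall fun x => (hG.tail_pos x).trans_le (hGM x)) fun δ hδ => ?_
  obtain ⟨T, hT⟩ := hG.exists_abs_tail_sub_le t hδ
  have hshift : Tendsto (fun x : ℝ => x - T) atTop atTop :=
    tendsto_atTop_atTop.2 fun b => ⟨b + T, fun x hx => by linarith⟩
  have hrem : (fun x => tail H (x - T)) =o[atTop] tail (mconv G H) :=
    ((ho.comp_tendsto hshift).trans_isBigO (hG.isBigO_tail_sub T)).trans_isBigO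
      (isBigO_tail_of_le hGM)
  refine ⟨fun x => (1 + Real.exp (γ * t)) * tail H (x - T), ?_, Eventually.of_forall
    (abs_tail_mconv_sub_le G H (Real.exp_pos _).le hδ.le hT)⟩
  simpa only [mul_div_assoc, mul_zero] using
    hrem.tendsto_div_nhds_zero.const_mul (1 + Real.exp (γ * t))

end ClassL

section Powers

variable (F : Measure ℝ) [IsProbabilityMeasure F]

instance isProbabilityMeasure_iconv : ∀ k : ℕ, IsProbabilityMeasure (iconv F k)
  | 0 => inferInstanceAs (IsProbabilityMeasure (Measure.dirac 0))
  | k + 1 =>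
    have := isProbabilityMeasure_iconv k
    inferInstanceAs (IsProbabilityMeasure (mconv _ _))

lemma tail_iconv_mono (hF : F (Iio 0) = 0) {k l : ℕ} (hkl : k ≤ l) (x : ℝ) :
    tail (iconv F k) x ≤ tail (iconv F l) x := by
  induction l, hkl using Nat.le_induction with
  | base => rfl
  | succ l _ ih => exact ih.trans (tail_le_tail_mconv _ _ hF x)

end Powers

theorem stmt4_general (F : Measure ℝ) [IsProbabilityMeasure F] (hs : F (Set.Iio 0) = 0)
    (n : ℕ) (hn : 2 ≤ n) (γ : ℝ) (hL : MemL γ (iconv F n))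
    (h : (fun x => tail F x) =o[Filter.atTop] fun x => tail (iconv F 2) x) :
    ∀ k : ℕ, n ≤ k → MemL γ (iconv F k) := by
  intro k hk
  induction k, hk using Nat.le_induction with
  | base => exact hL
  | succ k hnk ih =>
    exact ih.mconv_of_isLittleO hs
      (h.trans_isBigO (isBigO_tail_of_le (tail_iconv_mono F hs (hn.trans hnk))))

theorem stmt4 (F : Measure ℝ) [IsProbabilityMeasure F] (hs : F (Set.Iio 0) = 0)
    (n : ℕ) (hn : 2 ≤ n) (γ : ℝ) (hγ : 0 ≤ γ) (hL : MemL γ (iconv F n))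
    (h : (fun x => tail F x) =o[Filter.atTop] fun x => tail (iconv F 2) x) :
    ∀ k : ℕ, n ≤ k → MemL γ (iconv F k) :=
  stmt4_general F hs n hn γ hL h
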